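/- Let χ₀ : ℝ^n → ℂ be a Schwartz function, let R₀ > 0, and let ξ₀ ∈ ℝ^n with ‖ξ₀‖ > 2R₀. Then for every N ∈ ℕ there exists C_N > 0 such that for all h ∈ (0,1], ∫_{{ξ ∈ ℝ^n : ‖ξ‖ ≤ 2R₀/h}} |χ̂₀(ξ − ξ₀/h)|² dξ ≤ C_N h^N. -/

import Mathlib

open Real MeasureTheory Metric
open scoped RealInnerProductSpace FourierTransform

/-- The Fourier transform `û(ξ) := (2π)^{-n/2} ∫ e^{-i⟨x,ξ⟩} u(x) dx`. -/
noncomputable def FT {n : ℕ} (u : EuclideanSpace ℝ (Fin n) → ℂ)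
    (ξ : EuclideanSpace ℝ (Fin n)) : ℂ :=
  ((2 * π) ^ (-(n : ℝ) / 2) : ℝ) •
    ∫ x : EuclideanSpace ℝ (Fin n), Complex.exp (-Complex.I * (⟪x, ξ⟫ : ℝ)) * u x

/-!
On the ball `‖ξ‖ ≤ 2R₀/h` the shifted frequency `ξ - ξ₀/h` has norm at least `(‖ξ₀‖ - 2R₀)/h`,
so the rapid decay of `χ̂₀` bounds the integrand by `O(h^{2k})` for every `k`, while the ball has
volume `O(h^{-n})`. Taking `k = N + n` gives `O(h^{2N+n}) ⊆ O(h^N)`.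
-/

lemma FT_eq_smul_fourier {n : ℕ} (u : EuclideanSpace ℝ (Fin n) → ℂ)
    (ξ : EuclideanSpace ℝ (Fin n)) :
    FT u ξ = ((2 * π) ^ (-(n : ℝ) / 2) : ℝ) • 𝓕 u ((2 * π)⁻¹ • ξ) := by
  rw [FT, Real.fourier_eq']
  congr 1
  refine congrArg _ (funext fun x => ?_)
  rw [real_inner_smul_right, smul_eq_mul]
  congr 2
  have hπ : (π : ℂ) ≠ 0 := by exact_mod_cast Real.pi_ne_zero
  push_cast
  field_simp

lemma SchwartzMap.exists_pow_mul_norm_FT_le {n : ℕ}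
    (χ : SchwartzMap (EuclideanSpace ℝ (Fin n)) ℂ) (k : ℕ) :
    ∃ A, ∀ ξ, ‖ξ‖ ^ k * ‖FT (⇑χ) ξ‖ ≤ A := by
  obtain ⟨D, -, hD⟩ := (𝓕 χ).decay k 0
  set c : ℝ := (2 * π) ^ (-(n : ℝ) / 2)
  have hc : 0 ≤ c := by positivity
  refine ⟨c * (2 * π) ^ k * D, fun ξ => ?_⟩
  have hdecay := hD ((2 * π)⁻¹ • ξ)
  rw [norm_iteratedFDeriv_zero, norm_smul, Real.norm_of_nonneg (by positivity), mul_pow,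
    SchwartzMap.fourier_coe] at hdecay
  rw [FT_eq_smul_fourier, norm_smul, Real.norm_of_nonneg hc]
  calc ‖ξ‖ ^ k * (c * ‖𝓕 (⇑χ) ((2 * π)⁻¹ • ξ)‖)
      = c * (2 * π) ^ k * ((2 * π)⁻¹ ^ k * ‖ξ‖ ^ k * ‖𝓕 (⇑χ) ((2 * π)⁻¹ • ξ)‖) := by
        rw [inv_pow]
        field_simp
    _ ≤ c * (2 * π) ^ k * D := by gcongr

lemma norm_le_div_pow_of_forall_pow_mul_norm_le {E F : Type*} [Norm E] [SeminormedAddGroup F] {f : E → F}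
    {k : ℕ} {A : ℝ} (hf : ∀ x, ‖x‖ ^ k * ‖f x‖ ≤ A) {x : E} {ρ : ℝ} (hρ : 0 < ρ)
    (hx : ρ ≤ ‖x‖) : ‖f x‖ ≤ A / ρ ^ k := by
  rw [le_div_iff₀' (pow_pos hρ k)]
  exact (mul_le_mul_of_nonneg_right (pow_le_pow_left₀ hρ.le hx k) (norm_nonneg _)).trans (hf x)

lemma sub_le_mul_norm_sub_inv_smul {E : Type*} [NormedAddCommGroup E] [NormedSpace ℝ E]
    {h r : ℝ} (hh : 0 < h) {ξ ξ₀ : E} (hξ : ‖ξ‖ ≤ r / h) :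
    ‖ξ₀‖ - r ≤ h * ‖ξ - h⁻¹ • ξ₀‖ := by
  have hhξ : h * ‖ξ‖ ≤ r := by rwa [le_div_iff₀' hh] at hξ
  calc ‖ξ₀‖ - r ≤ ‖ξ₀‖ - ‖h • ξ‖ := by
        rw [norm_smul, Real.norm_of_nonneg hh.le]; linarith
    _ ≤ ‖h • ξ - ξ₀‖ := by rw [norm_sub_rev]; exact norm_sub_norm_le _ _
    _ = h * ‖ξ - h⁻¹ • ξ₀‖ := by
        rw [← smul_inv_smul₀ hh.ne' ξ₀, ← smul_sub, norm_smul, Real.norm_of_nonneg hh.le,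
          smul_inv_smul₀ hh.ne']

lemma setIntegral_closedBall_le_mul_volume {E : Type*} [NormedAddCommGroup E] [NormedSpace ℝ E]
    [FiniteDimensional ℝ E] [MeasurableSpace E] [BorelSpace E] (μ : Measure E)
    [μ.IsAddHaarMeasure] {f : E → ℝ} {r M : ℝ} (hr : 0 ≤ r)
    (hf : ∀ x ∈ closedBall 0 r, ‖f x‖ ≤ M) :
    ∫ x in closedBall 0 r, f x ∂μ ≤ M * (r ^ Module.finrank ℝ E * μ.real (closedBall 0 1)) := by
  rw [← Measure.addHaar_real_closedBall' μ 0 hr]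
  exact (le_abs_self _).trans (norm_setIntegral_le_of_norm_le_const measure_closedBall_lt_top hf)

/-- For a Schwartz function `χ₀`, `R₀ > 0` and `ξ₀` with `‖ξ₀‖ > 2R₀`:
for every `N` there is `C_N > 0` such that for all `h ∈ (0,1]`,
`∫_{‖ξ‖ ≤ 2R₀/h} |χ̂₀(ξ − ξ₀/h)|² dξ ≤ C_N h^N`. -/
theorem stmt_10 {n : ℕ} (χ₀ : SchwartzMap (EuclideanSpace ℝ (Fin n)) ℂ)
    (R₀ : ℝ) (hR₀ : 0 < R₀) (ξ₀ : EuclideanSpace ℝ (Fin n)) (hξ₀ : 2 * R₀ < ‖ξ₀‖) :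
    ∀ N : ℕ, ∃ C > (0:ℝ), ∀ h ∈ Set.Ioc (0:ℝ) 1,
      (∫ ξ in {ξ : EuclideanSpace ℝ (Fin n) | ‖ξ‖ ≤ 2 * R₀ / h},
        ‖FT (⇑χ₀) (ξ - h⁻¹ • ξ₀)‖ ^ 2) ≤ C * h ^ N := by
  intro N
  set δ := ‖ξ₀‖ - 2 * R₀
  have hδ : 0 < δ := sub_pos.2 hξ₀
  obtain ⟨A, hA⟩ := χ₀.exists_pow_mul_norm_FT_le (N + n)
  set V := volume.real (closedBall (0 : EuclideanSpace ℝ (Fin n)) 1)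
  set K := (A / δ ^ (N + n)) ^ 2 * (2 * R₀) ^ n * V
  refine ⟨max K 1, lt_max_of_lt_right one_pos, fun h ⟨hh0, hh1⟩ => ?_⟩
  have hpointwise : ∀ ξ ∈ closedBall 0 (2 * R₀ / h),
      ‖‖FT (⇑χ₀) (ξ - h⁻¹ • ξ₀)‖ ^ 2‖ ≤ (A / (δ / h) ^ (N + n)) ^ 2 := fun ξ hξ => by
    have hfar : δ / h ≤ ‖ξ - h⁻¹ • ξ₀‖ := by
      rw [div_le_iff₀' hh0]
      exact sub_le_mul_norm_sub_inv_smul hh0 (mem_closedBall_zero_iff.1 hξ)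
    rw [norm_pow, norm_norm]
    exact pow_le_pow_left₀ (norm_nonneg _)
      (norm_le_div_pow_of_forall_pow_mul_norm_le hA (div_pos hδ hh0) hfar) 2
  have hball : {ξ : EuclideanSpace ℝ (Fin n) | ‖ξ‖ ≤ 2 * R₀ / h} = closedBall 0 (2 * R₀ / h) := by
    ext; simp
  rw [hball]
  calc _ ≤ (A / (δ / h) ^ (N + n)) ^ 2 * ((2 * R₀ / h) ^ n * V) := by
        simpa only [finrank_euclideanSpace_fin] using
          setIntegral_closedBall_le_mul_volume volume (by positivity) hpointwise
    _ = K * h ^ (2 * N + n) := by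
        rw [show 2 * N + n = 2 * (N + n) - n by omega, pow_sub₀ _ hh0.ne' (by omega), pow_mul]
        simp only [K, div_pow]
        field_simp
        ring
    _ ≤ max K 1 * h ^ N := by
        exact mul_le_mul (le_max_left _ _) (pow_le_pow_of_le_one hh0.le hh1 (by omega))
          (by positivity) (by positivity)
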